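/- arXiv:2002.02869 — 4 statements merged into one kernel-verified Lean document; each statement's English description precedes it below -/
import Mathlib

section
/- The determinant of the 3×3 matrix R = [[1, F, -F], [-F, 1-F², F+F²], [F+F², -F+F²+F³, 1-2F²-F³]] equals 1 for every real number F. -/
/-!
Each of the three on-the-fly updates of RevDE adds `F` times a difference of the other two
coordinates to one coordinate, i.e. it is a product of two transvections. Hence `R` is a
product of six transvections and has determinant one.
-/

open Matrix

section DifferentialMutation

variable {n α : Type*} [Fintype n] [DecidableEq n] [CommRing α]

/-- The update `x i ↦ x i + F * (x j - x k)`, all other coordinates unchanged. -/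
def differentialMutation (F : α) (i j k : n) : Matrix n n α :=
  transvection i j F * transvection i k (-F)

theorem det_differentialMutation (F : α) {i j k : n} (hij : i ≠ j) (hik : i ≠ k) :
    (differentialMutation F i j k).det = 1 := by
  rw [differentialMutation, det_mul, det_transvection_of_ne _ _ hij,
    det_transvection_of_ne _ _ hik, one_mul]

end DifferentialMutation

theorem revde_eq_differentialMutation_mul {α : Type*} [CommRing α] (F : α) :
    (!![1, F, -F;
        -F, 1 - F ^ 2, F + F ^ 2;
        F + F ^ 2, -F + F ^ 2 + F ^ 3, 1 - 2 * F ^ 2 - F ^ 3] : Matrix (Fin 3) (Fin 3) α) =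
      differentialMutation F 2 0 1 * differentialMutation F 1 2 0 *
        differentialMutation F 0 1 2 := by
  ext a b
  fin_cases a <;> fin_cases b <;>
    simp [differentialMutation, transvection, Matrix.mul_apply, Fin.sum_univ_three,
      Matrix.one_apply, Matrix.single_apply] <;> ring

theorem revde_det (F : ℝ) :
    (!![1, F, -F;
        -F, 1 - F ^ 2, F + F ^ 2;
        F + F ^ 2, -F + F ^ 2 + F ^ 3, 1 - 2 * F ^ 2 - F ^ 3] :
      Matrix (Fin 3) (Fin 3) ℝ).det = 1 := by
  rw [revde_eq_differentialMutation_mul, det_mul, det_mul,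
    det_differentialMutation F (by decide) (by decide),
    det_differentialMutation F (by decide) (by decide),
    det_differentialMutation F (by decide) (by decide), one_mul, one_mul]
end

section
/- For any vectors x₁, x₂, x₃ ∈ ℝᴰ and real F, the vectors defined recursively by y₁ = x₁ + F(x₂ - x₃), y₂ = x₂ + F(x₃ - y₁), y₃ = x₃ + F(y₁ - y₂) satisfy, componentwise, (y₁, y₂, y₃)ᵀ = R (x₁, x₂, x₃)ᵀ where R = [[1, F, -F], [-F, 1-F², F+F²], [F+F², -F+F²+F³, 1-2F²-F³]]. -/
/-!
Each of the three on-the-fly updates changes one coordinate of the triplet by a linear combination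
of the current coordinates, i.e. it is an elementary (shear) matrix acting on `(x₁, x₂, x₃)`.
Since the later updates see the already updated values, the whole step is the product of the three
shears, taken in reverse order, and multiplying them out gives `R`.
-/

open Matrix

namespace RevDE

variable {R : Type*} [CommRing R] (F : R)

def matrix : Matrix (Fin 3) (Fin 3) R :=
  !![1, F, -F;
     -F, 1 - F ^ 2, F + F ^ 2;
     F + F ^ 2, -F + F ^ 2 + F ^ 3, 1 - 2 * F ^ 2 - F ^ 3]

def update₁ : Matrix (Fin 3) (Fin 3) R := !![1, F, -F; 0, 1, 0; 0, 0, 1]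

def update₂ : Matrix (Fin 3) (Fin 3) R := !![1, 0, 0; -F, 1, F; 0, 0, 1]

def update₃ : Matrix (Fin 3) (Fin 3) R := !![1, 0, 0; 0, 1, 0; F, -F, 1]

theorem update₁_mulVec (a b c : R) : update₁ F *ᵥ ![a, b, c] = ![a + F * (b - c), b, c] := by
  ext i; fin_cases i <;> simp [update₁]
  ring

theorem update₂_mulVec (a b c : R) : update₂ F *ᵥ ![a, b, c] = ![a, b + F * (c - a), c] := by
  ext i; fin_cases i <;> simp [update₂]
  ring

theorem update₃_mulVec (a b c : R) : update₃ F *ᵥ ![a, b, c] = ![a, b, c + F * (a - b)] := by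
  ext i; fin_cases i <;> simp [update₃]
  ring

theorem matrix_eq_update_mul : matrix F = update₃ F * update₂ F * update₁ F := by
  ext i j; fin_cases i <;> fin_cases j <;> simp [matrix, update₁, update₂, update₃] <;> ring

theorem vec_eq_matrix_mulVec {x₁ x₂ x₃ y₁ y₂ y₃ : R}
    (h₁ : y₁ = x₁ + F * (x₂ - x₃)) (h₂ : y₂ = x₂ + F * (x₃ - y₁)) (h₃ : y₃ = x₃ + F * (y₁ - y₂)) :
    ![y₁, y₂, y₃] = matrix F *ᵥ ![x₁, x₂, x₃] := by
  rw [matrix_eq_update_mul, ← mulVec_mulVec, ← mulVec_mulVec, update₁_mulVec, ← h₁,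
    update₂_mulVec, ← h₂, update₃_mulVec, ← h₃]

end RevDE

theorem revde_is_linear (D : ℕ) (F : ℝ) (x₁ x₂ x₃ y₁ y₂ y₃ : Fin D → ℝ)
    (h₁ : y₁ = x₁ + F • (x₂ - x₃))
    (h₂ : y₂ = x₂ + F • (x₃ - y₁))
    (h₃ : y₃ = x₃ + F • (y₁ - y₂)) :
    ∀ d : Fin D,
      ![y₁ d, y₂ d, y₃ d] =
        Matrix.mulVec
          (!![1, F, -F;
              -F, 1 - F ^ 2, F + F ^ 2;
              F + F ^ 2, -F + F ^ 2 + F ^ 3, 1 - 2 * F ^ 2 - F ^ 3] :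
            Matrix (Fin 3) (Fin 3) ℝ)
          ![x₁ d, x₂ d, x₃ d] := by
  exact fun d => RevDE.vec_eq_matrix_mulVec F (congrFun h₁ d) (congrFun h₂ d) (congrFun h₃ d)
end

section
/- The characteristic polynomial of R = [[1, F, -F], [-F, 1-F², F+F²], [F+F², -F+F²+F³, 1-2F²-F³]] is λ³ - t·λ² + t·λ - 1, where t = 3 - 3F² - F³; in particular it factors as (λ - 1)(λ² - (t - 1)λ + 1). -/
/-!
The trace of the RevDE matrix and the sum of its principal `2 × 2` minors both equal `t`, and its
determinant is `1`; so its characteristic polynomial `X³ - tr X² + e₂ X - det` is palindromic and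
has the root `1`.
-/

open Polynomial

namespace Matrix

variable {R : Type*} [CommRing R]

def sumPrincipalMinorsTwo (M : Matrix (Fin 3) (Fin 3) R) : R :=
  (M 0 0 * M 1 1 - M 0 1 * M 1 0) + (M 0 0 * M 2 2 - M 0 2 * M 2 0) +
    (M 1 1 * M 2 2 - M 1 2 * M 2 1)

theorem charpoly_fin_three (M : Matrix (Fin 3) (Fin 3) R) :
    M.charpoly = X ^ 3 - C M.trace * X ^ 2 + C M.sumPrincipalMinorsTwo * X - C M.det := by
  rw [charpoly, det_fin_three, det_fin_three, trace_fin_three, sumPrincipalMinorsTwo]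
  simp only [charmatrix_apply, diagonal_apply, Fin.isValue, Fin.reduceEq, if_true, if_false,
    map_sub, map_add, map_mul]
  ring

end Matrix

theorem Polynomial.X_pow_three_sub_C_mul_X_sq_add_C_mul_X_sub_one {R : Type*} [CommRing R]
    (t : R) :
    X ^ 3 - C t * X ^ 2 + C t * X - 1 = (X - 1) * (X ^ 2 - C (t - 1) * X + 1) := by
  rw [map_sub, map_one]
  ring

section RevDE

variable {R : Type*} [CommRing R] (F : R)

def revDE : Matrix (Fin 3) (Fin 3) R :=
  !![1, F, -F;
    -F, 1 - F ^ 2, F + F ^ 2;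
    F + F ^ 2, -F + F ^ 2 + F ^ 3, 1 - 2 * F ^ 2 - F ^ 3]

theorem revDE_trace : (revDE F).trace = 3 - 3 * F ^ 2 - F ^ 3 := by
  simp only [revDE, Matrix.trace_fin_three, Matrix.of_apply, Matrix.cons_val',
    Matrix.cons_val_zero, Matrix.cons_val_one, Matrix.cons_val, Matrix.cons_val_fin_one]
  ring

theorem revDE_sumPrincipalMinorsTwo :
    (revDE F).sumPrincipalMinorsTwo = 3 - 3 * F ^ 2 - F ^ 3 := by
  simp only [revDE, Matrix.sumPrincipalMinorsTwo, Matrix.of_apply, Matrix.cons_val',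
    Matrix.cons_val_zero, Matrix.cons_val_one, Matrix.cons_val, Matrix.cons_val_fin_one]
  ring

theorem revDE_det : (revDE F).det = 1 := by
  simp only [revDE, Matrix.det_fin_three, Matrix.of_apply, Matrix.cons_val', Matrix.cons_val_zero,
    Matrix.cons_val_one, Matrix.cons_val, Matrix.cons_val_fin_one]
  ring

theorem revDE_charpoly :
    (revDE F).charpoly =
      X ^ 3 - C (3 - 3 * F ^ 2 - F ^ 3) * X ^ 2 + C (3 - 3 * F ^ 2 - F ^ 3) * X - 1 := by
  rw [Matrix.charpoly_fin_three, revDE_trace, revDE_sumPrincipalMinorsTwo, revDE_det, map_one]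

end RevDE

open Polynomial in
theorem revde_charpoly (F : ℝ) :
    (!![1, F, -F;
        -F, 1 - F ^ 2, F + F ^ 2;
        F + F ^ 2, -F + F ^ 2 + F ^ 3, 1 - 2 * F ^ 2 - F ^ 3] :
      Matrix (Fin 3) (Fin 3) ℝ).charpoly =
      X ^ 3 - C (3 - 3 * F ^ 2 - F ^ 3) * X ^ 2 + C (3 - 3 * F ^ 2 - F ^ 3) * X - 1 ∧
    (!![1, F, -F;
        -F, 1 - F ^ 2, F + F ^ 2;
        F + F ^ 2, -F + F ^ 2 + F ^ 3, 1 - 2 * F ^ 2 - F ^ 3] :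
      Matrix (Fin 3) (Fin 3) ℝ).charpoly =
      (X - 1) * (X ^ 2 - C ((3 - 3 * F ^ 2 - F ^ 3) - 1) * X + 1) :=
  ⟨revDE_charpoly F,
    (revDE_charpoly F).trans (X_pow_three_sub_C_mul_X_sq_add_C_mul_X_sub_one _)⟩
end

section
/- For every F with 0 < F < 1, the two eigenvalues of the RevDE matrix R other than 1 are non-real complex conjugates, each of absolute value exactly 1. -/
/-!
The characteristic polynomial of `R` is `(X - 1) * (X ^ 2 - τ * X + 1)` with `τ = 2 - 3F² - F³`.
Since `3F² + F³ - 4 = (F - 1)(F + 2)²`, we have `|τ| < 2` for `0 < F < 1`, so the quadratic factor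
has two non-real conjugate roots `τ / 2 ± i √(1 - τ² / 4)`, whose product `1` is their common
squared modulus.
-/

open Polynomial ComplexConjugate

def revdeMatrix {R : Type*} [CommRing R] (f : R) : Matrix (Fin 3) (Fin 3) R :=
  !![1, f, -f;
     -f, 1 - f ^ 2, f + f ^ 2;
     f + f ^ 2, -f + f ^ 2 + f ^ 3, 1 - 2 * f ^ 2 - f ^ 3]

theorem charpoly_revdeMatrix {R : Type*} [CommRing R] (f : R) :
    (revdeMatrix f).charpoly = (X - 1) * (X ^ 2 - C (2 - 3 * f ^ 2 - f ^ 3) * X + 1) := by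
  rw [Matrix.charpoly, Matrix.det_fin_three]
  simp [revdeMatrix, map_ofNat]
  ring

theorem X_sub_C_mul_X_sub_C_conj (z : ℂ) :
    (X - C z) * (X - C (conj z)) = X ^ 2 - C ((2 * z.re : ℝ) : ℂ) * X + C (‖z‖ ^ 2 : ℂ) := by
  rw [← Complex.add_conj, map_add, ← Complex.mul_conj', map_mul]
  ring

theorem Complex.exists_norm_eq_one_im_ne_zero_re_eq {t : ℝ} (ht : |t| < 1) :
    ∃ z : ℂ, z.im ≠ 0 ∧ ‖z‖ = 1 ∧ z.re = t := by
  have hpos : 0 < 1 - t ^ 2 := sub_pos.mpr ((sq_lt_one_iff_abs_lt_one t).mpr ht)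
  refine ⟨⟨t, √(1 - t ^ 2)⟩, (Real.sqrt_pos.mpr hpos).ne', ?_, rfl⟩
  rw [Complex.norm_def, Complex.normSq_mk, ← sq, ← sq, Real.sq_sqrt hpos.le]
  simp

theorem abs_one_sub_three_sq_add_cube_div_two_lt_one {F : ℝ} (hF0 : 0 < F) (hF1 : F < 1) :
    |1 - (3 * F ^ 2 + F ^ 3) / 2| < 1 := by
  have hpos : 0 < 3 * F ^ 2 + F ^ 3 := by positivity
  have hlt : 3 * F ^ 2 + F ^ 3 - 4 < 0 := by
    rw [show 3 * F ^ 2 + F ^ 3 - 4 = (F - 1) * (F + 2) ^ 2 by ring]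
    exact mul_neg_of_neg_of_pos (sub_neg.mpr hF1) (by positivity)
  rw [abs_lt]
  constructor <;> linarith

open Polynomial in
theorem revde_unit_modulus_eigenvalues (F : ℝ) (hF0 : 0 < F) (hF1 : F < 1) :
    ∃ a : ℂ, a.im ≠ 0 ∧ ‖a‖ = 1 ∧
      (!![1, (F : ℂ), -F;
          -F, 1 - F ^ 2, F + F ^ 2;
          F + F ^ 2, -F + F ^ 2 + F ^ 3, 1 - 2 * F ^ 2 - F ^ 3] :
        Matrix (Fin 3) (Fin 3) ℂ).charpoly =
        (X - 1) * (X - C a) * (X - C (starRingEnd ℂ a)) := by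
  obtain ⟨a, ha_im, ha_norm, ha_re⟩ := Complex.exists_norm_eq_one_im_ne_zero_re_eq
    (abs_one_sub_three_sq_add_cube_div_two_lt_one hF0 hF1)
  refine ⟨a, ha_im, ha_norm, ?_⟩
  rw [← revdeMatrix, charpoly_revdeMatrix, mul_assoc, X_sub_C_mul_X_sub_C_conj, ha_norm, ha_re,
    Complex.ofReal_one, one_pow, map_one]
  congr 5
  push_cast
  ring
end
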